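/- Let μ be a probability measure on the group G₂ = (ℤ/2ℤ)² whose support is all of G₂ (contains exactly 4 elements) and such that max_{x∈G₂} μ({x}) = 1/2. Then μ ∉ TEC(G₂). -/

import Mathlib

open scoped BigOperators

/-- The group `G₂ = (ℤ/2ℤ)²`. -/
abbrev G2 : Type := ZMod 2 × ZMod 2

/-- The character pairing `(x,y) = (-1)^(x₁y₁+x₂y₂)`. -/
noncomputable def pairing2 (x y : G2) : ℝ :=
  (-1 : ℝ) ^ (x.1.val * y.1.val + x.2.val * y.2.val)

/-- A probability measure on `G₂`, given by its mass function. -/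
def IsProb2 (p : G2 → ℝ) : Prop := (∀ x, 0 ≤ p x) ∧ ∑ x : G2, p x = 1

/-- The characteristic function `μ̂(y) = Σ_x (x,y) μ({x})`. -/
noncomputable def charFn2 (p : G2 → ℝ) (y : G2) : ℝ := ∑ x : G2, pairing2 x y * p x

/-- The measure of a set `E ⊆ G₂`. -/
noncomputable def measOf2 (p : G2 → ℝ) (E : Set G2) : ℝ := ∑ x : G2, E.indicator p x

/-- `μ` has a trivial equivalence class: every probability measure `ν` with
`|ν̂| = |μ̂|` is a shift `μₓ` of `μ` (central symmetry is the identity on `G₂`). -/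
def TEC2 (p : G2 → ℝ) : Prop :=
  ∀ q : G2 → ℝ, IsProb2 q → (∀ y : G2, |charFn2 q y| = |charFn2 p y|) →
    ∃ x : G2, ∀ e : G2, q e = p (e + x)

/-- The support of `μ`: the set of points of positive mass. -/
def support2 (p : G2 → ℝ) : Set G2 := {x : G2 | 0 < p x}

/-- `a_max = max_{x∈G₂} μ({x})`. -/
noncomputable def amax2 (p : G2 → ℝ) : ℝ := sSup (Set.range p)

/-!
Since `μ` has four atoms and total mass `1`, the function `ν = 1/2 - μ` is again a probability
measure as soon as `μ ≤ 1/2`. The characters of `G₂` other than the trivial one sum to zero over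
`G₂`, so `ν̂ = -μ̂` away from `0`, while `ν̂(0) = μ̂(0) = 1`. If `ν` were a shift `μₓ`, then
`μ(m + x) = 1/2 - μ(m) = 0` at a point `m` where `μ` attains its maximum `1/2`, contradicting
the full support of `μ`.
-/

lemma G2.add_self (x : G2) : x + x = 0 := by
  revert x
  decide

lemma G2.sum_eq (f : G2 → ℝ) : ∑ x : G2, f x = f (0, 0) + f (0, 1) + f (1, 0) + f (1, 1) := by
  rw [Fintype.sum_prod_type, show (Finset.univ : Finset (ZMod 2)) = {0, 1} by decide]
  simp only [Finset.sum_pair zero_ne_one]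
  ring

lemma sum_pairing2_zero : ∑ x : G2, pairing2 x 0 = 4 := by
  simp [pairing2]

lemma sum_pairing2_of_ne_zero {y : G2} (hy : y ≠ 0) : ∑ x : G2, pairing2 x y = 0 := by
  have hcases : y = (0, 1) ∨ y = (1, 0) ∨ y = (1, 1) := by
    revert y
    decide
  rcases hcases with rfl | rfl | rfl <;>
    norm_num [G2.sum_eq, pairing2, ZMod.val_one]

lemma charFn2_zero {p : G2 → ℝ} (hsum : ∑ x : G2, p x = 1) : charFn2 p 0 = 1 := by
  simpa [charFn2, pairing2] using hsum

lemma charFn2_half_sub (p : G2 → ℝ) (y : G2) :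
    charFn2 (fun e => 1/2 - p e) y = (∑ x : G2, pairing2 x y) / 2 - charFn2 p y := by
  simp only [charFn2, mul_sub, Finset.sum_sub_distrib, Finset.sum_div, mul_one_div]

lemma abs_charFn2_half_sub {p : G2 → ℝ} (hsum : ∑ x : G2, p x = 1) (y : G2) :
    |charFn2 (fun e => 1/2 - p e) y| = |charFn2 p y| := by
  rw [charFn2_half_sub]
  by_cases hy : y = 0
  · subst hy
    rw [sum_pairing2_zero, charFn2_zero hsum]
    norm_num
  · rw [sum_pairing2_of_ne_zero hy, zero_div, zero_sub, abs_neg]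

lemma isProb2_half_sub {p : G2 → ℝ} (hp : IsProb2 p) (hle : ∀ x, p x ≤ 1/2) :
    IsProb2 (fun e => 1/2 - p e) := by
  refine ⟨fun x => by linarith [hle x], ?_⟩
  have hsum := hp.2
  rw [G2.sum_eq] at hsum ⊢
  linarith

lemma le_amax2 (p : G2 → ℝ) (x : G2) : p x ≤ amax2 p :=
  le_csSup (Set.finite_range p).bddAbove ⟨x, rfl⟩

lemma exists_eq_amax2 (p : G2 → ℝ) : ∃ m, p m = amax2 p :=
  (Set.range_nonempty p).csSup_mem (Set.finite_range p)

/-- if the support of `μ` is all of `G₂` and `a_max = 1/2`,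
then `μ ∉ TEC(G₂)`. -/
theorem stmt18 (p : G2 → ℝ) (hp : IsProb2 p)
    (hsupp : support2 p = Set.univ) (hmax : amax2 p = 1/2) :
    ¬ TEC2 p := by
  intro htec
  obtain ⟨x, hx⟩ := htec _ (isProb2_half_sub hp fun e => hmax ▸ le_amax2 p e)
    (abs_charFn2_half_sub hp.2)
  obtain ⟨m, hm⟩ := exists_eq_amax2 p
  have hpos : 0 < p (m + x) := show m + x ∈ support2 p from hsupp ▸ Set.mem_univ _
  have hshift := hx (m + x)
  rw [add_assoc, G2.add_self, add_zero] at hshift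
  linarith
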